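/- If H is a nontrivial weakly nilpotent hypergroup, then its center Z(H) is nontrivial (Z(H) ≠ {1}). -/

import Mathlib

/-! Modulo `{1}` every class `1 h 1` is the singleton `{h}`, so the full preimage of
`Z(H//{1})` is `Z(H)` itself. Hence if `Z(H) = {1}`, the upper central series is
stationary at `{1}` and can only reach `H` when `H = {1}`. -/

/-- A hypergroup: a set with a hypermultiplication, identity and involution
satisfying (H1), (H2), (H3). -/
structure Hypergroup (H : Type*) where
  hmul : H → H → Set H
  one : H
  star : H → H
  assoc : ∀ p q r : H, (⋃ x ∈ hmul q r, hmul p x) = ⋃ x ∈ hmul p q, hmul x r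
  hmul_one : ∀ s : H, hmul s one = {s}
  inv_left : ∀ p q r : H, r ∈ hmul p q → q ∈ hmul (star p) r
  inv_right : ∀ p q r : H, r ∈ hmul p q → p ∈ hmul r (star q)

namespace Hypergroup

variable {H : Type*} (G : Hypergroup H)

/-- Complex (set) product: `AB = ⋃_{a ∈ A, b ∈ B} ab`. -/
def smul (A B : Set H) : Set H := ⋃ a ∈ A, ⋃ b ∈ B, G.hmul a b

/-- `A* = { a* | a ∈ A }`. -/
def sstar (A : Set H) : Set H := G.star '' A

/-- A nonempty subset `F` is closed if `F*F ⊆ F`. -/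
def IsClosed (F : Set H) : Prop := F.Nonempty ∧ G.smul (G.sstar F) F ⊆ F

/-- `F` is normal in `K`: `Fk ⊆ kF` for all `k ∈ K`. -/
def IsNormalIn (F K : Set H) : Prop := ∀ k ∈ K, G.smul F {k} ⊆ G.smul {k} F

/-- `F` is strongly normal in `K`: `k*Fk ⊆ F` for all `k ∈ K`. -/
def IsStronglyNormalIn (F K : Set H) : Prop :=
  ∀ k ∈ K, G.smul (G.smul {G.star k} F) {k} ⊆ F

/-- An element `s` is thin if `s*s = {1}`. -/
def IsThinElem (s : H) : Prop := G.hmul (G.star s) s = {G.one}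

/-- A hypergroup is thin if all elements are thin. -/
def IsThin : Prop := ∀ s : H, G.IsThinElem s

/-- The center `Z(H) = {h | hx = xh for all x, h*h = {1}}`. -/
def center : Set H :=
  {h | (∀ x : H, G.hmul h x = G.hmul x h) ∧ G.hmul (G.star h) h = {G.one}}

/-- The class `h^F := FhF`. -/
def cls (F : Set H) (h : H) : Set H := G.smul (G.smul F {h}) F

/-- The quotient set `H//F := { h^F | h ∈ H }`. -/
def quotSet (F : Set H) : Set (Set H) := Set.range (G.cls F)

/-- The class `h^F` as an element of `H//F`. -/
def qcls (F : Set H) (h : H) : G.quotSet F := ⟨G.cls F h, h, rfl⟩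

/-- The full preimage in `H` of the center of the quotient `H//T`:
`{h | h^T ∈ Z(H//T)}`, i.e. `h^T` commutes with all classes `y^T` and
`(h^T)*(h^T) = {1^T} = {T}`. -/
def qCenterPre (T : Set H) : Set H :=
  {h | (∀ y : H, G.cls T '' (G.smul (G.smul {h} T) {y}) =
          G.cls T '' (G.smul (G.smul {y} T) {h})) ∧
       G.cls T '' (G.smul (G.smul {G.star h} T) {h}) = {T}}

/-- The upper central series: `Z₀(H) = {1}`, and `Zᵢ₊₁(H)` is the full preimage
of `Z(H//Zᵢ(H))`, i.e. `Zᵢ₊₁(H)//Zᵢ(H) = Z(H//Zᵢ(H))`. -/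
def upperCentral : ℕ → Set H
  | 0 => {G.one}
  | n + 1 => G.qCenterPre (upperCentral n)

/-- A hypergroup is weakly nilpotent if `Zₙ(H) = H` for some `n`. -/
def WeaklyNilpotent : Prop := ∃ n : ℕ, G.upperCentral n = Set.univ

/-- `F` is subnormal in `K` via a chain of successively normal closed subsets. -/
def IsSubnormalIn (F K : Set H) : Prop :=
  ∃ n : ℕ, ∃ C : ℕ → Set H, C 0 = F ∧ C n = K ∧
    ∀ i < n, C i ⊆ C (i + 1) ∧ G.IsClosed (C (i + 1)) ∧ G.IsNormalIn (C i) (C (i + 1))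

/-- The quotient `K//N` is thin: `(k^N)*(k^N) = {1^N}` for all `k ∈ K`. -/
def QuotThin (N K : Set H) : Prop :=
  ∀ k ∈ K, G.cls N '' (G.smul (G.smul {G.star k} N) {k}) = {N}

/-- A residually-thin chain from `{1}` to `K`. -/
def RTChainOn (K : Set H) (n : ℕ) (C : ℕ → Set H) : Prop :=
  C 0 = {G.one} ∧ C n = K ∧
    ∀ i < n, C i ⊆ C (i + 1) ∧ G.IsClosed (C (i + 1)) ∧ G.QuotThin (C i) (C (i + 1))

/-- The valency `n_K = ∏ |Cᵢ₊₁//Cᵢ|` computed along some RT chain for `K`. -/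
def HasValencyOn (K : Set H) (m : ℕ) : Prop :=
  ∃ n C, G.RTChainOn K n C ∧
    m = ∏ i ∈ Finset.range n, Nat.card (G.cls (C i) '' C (i + 1))

/-- A closed `p`-subset: a closed subset whose valency is a power of `p`. -/
def PSubsetOn (p : ℕ) (K : Set H) : Prop :=
  G.IsClosed K ∧ ∃ m k : ℕ, G.HasValencyOn K m ∧ m = p ^ k

/-- `h` is `p`-valenced in `K`: for every subnormal closed `p`-subset `U` of `K`
such that `(h*)^U h^U` consists of thin elements of the quotient,
`n_{(h*)^U h^U} = |(h*)^U h^U|` is a power of `p`. -/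
def PValencedElemOn (p : ℕ) (K : Set H) (h : H) : Prop :=
  ∀ U : Set H, G.IsClosed U → U ⊆ K → G.IsSubnormalIn U K → G.PSubsetOn p U →
    (∀ x ∈ G.smul (G.smul {G.star h} U) {h},
      G.cls U '' (G.smul (G.smul {G.star x} U) {x}) = {U}) →
    ∃ k : ℕ, Nat.card (G.cls U '' (G.smul (G.smul {G.star h} U) {h})) = p ^ k

/-- `K` is `p`-valenced if all its elements are. -/
def PValencedOn (p : ℕ) (K : Set H) : Prop := ∀ h ∈ K, G.PValencedElemOn p K h

theorem one_mem_hmul_star_self (s : H) : G.one ∈ G.hmul (G.star s) s :=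
  G.inv_left s G.one s (by simp [G.hmul_one])

theorem star_star (s : H) : G.star (G.star s) = s := by
  simpa [G.hmul_one, eq_comm] using G.inv_left _ _ _ (G.one_mem_hmul_star_self s)

theorem star_injective : Function.Injective G.star :=
  Function.LeftInverse.injective G.star_star

theorem one_hmul (s : H) : G.hmul G.one s = {s} := by
  refine Set.eq_singleton_iff_unique_mem.mpr ⟨?_, fun r hr => ?_⟩
  · simpa [G.star_star] using G.inv_right _ _ _ (G.one_mem_hmul_star_self (G.star s))
  · have h := G.inv_left _ _ _ (G.inv_right _ _ _ hr)
    rw [G.hmul_one] at h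
    exact (G.star_injective h).symm

theorem smul_smul_singleton_one (a b : H) :
    G.smul (G.smul {a} {G.one}) {b} = G.hmul a b := by
  simp [smul, G.hmul_one]

theorem cls_singleton_one : G.cls {G.one} = ({·} : H → Set H) := by
  funext x
  simp [cls, smul, G.one_hmul, G.hmul_one]

theorem qCenterPre_singleton_one : G.qCenterPre {G.one} = G.center := by
  ext h
  simp only [qCenterPre, center, Set.mem_ofPred_eq, cls_singleton_one,
    smul_smul_singleton_one, ← Set.image_singleton (f := ({·} : H → Set H)),
    Set.image_eq_image Set.singleton_injective]

theorem upperCentral_eq_singleton_one (hc : G.center = {G.one}) (n : ℕ) :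
    G.upperCentral n = {G.one} := by
  induction n with
  | zero => rfl
  | succ n ih => rw [upperCentral, ih, qCenterPre_singleton_one, hc]

end Hypergroup

/-- a nontrivial weakly nilpotent hypergroup has nontrivial
center. -/
theorem center_ne_one {H : Type*} (G : Hypergroup H)
    (hnt : (Set.univ : Set H) ≠ {G.one}) (hG : G.WeaklyNilpotent) :
    G.center ≠ {G.one} := by
  intro hc
  obtain ⟨n, hn⟩ := hG
  exact hnt (hn ▸ G.upperCentral_eq_singleton_one hc n)
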